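/- For every t ∈ (0,1], the quantities s_1 = (1/(t+L_0(t)))·∑_{i=1}^{N−1} L_i(t) and s_2 = (1/(t+L_0(t)))·∑_{i=1}^{N−1} ((N−i)/N)·L_i(t) satisfy 0 ≤ s_2 ≤ s_1 < 1, and the successful transmission probability satisfies the two-sided bound (t/(t+L_0(t)))·(1/(1 − s_2)) ≤ P_c(t) ≤ (t/(t+L_0(t)))·(1/(1 − s_1)). (This is property 1 of the paper's Lemma 3: P_c(t) is sandwiched between two fractional functions of t.) -/

import Mathlib

open MeasureTheory Finset

/-- `L_0(t) = 2t·∫_1^∞ τu/(u^β+τ) du + 2(1−t)·∫_0^∞ τu/(u^β+τ) du`. -/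
noncomputable def L0 (β τ t : ℝ) : ℝ :=
  2 * t * (∫ u in Set.Ioi (1 : ℝ), τ * u / (u ^ β + τ)) +
    2 * (1 - t) * (∫ u in Set.Ioi (0 : ℝ), τ * u / (u ^ β + τ))

/-- `L_i(t) = 2t·∫_1^∞ τ^i u^{β+1}/(u^β+τ)^{i+1} du + 2(1−t)·∫_0^∞ τ^i u^{β+1}/(u^β+τ)^{i+1} du`
for integers `i ≥ 1`. -/
noncomputable def Li (β τ : ℝ) (i : ℕ) (t : ℝ) : ℝ :=
  2 * t * (∫ u in Set.Ioi (1 : ℝ), τ ^ i * u ^ (β + 1) / (u ^ β + τ) ^ (i + 1)) +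
    2 * (1 - t) * (∫ u in Set.Ioi (0 : ℝ), τ ^ i * u ^ (β + 1) / (u ^ β + τ) ^ (i + 1))

/-- The strictly lower-triangular Toeplitz matrix `D(t)` with `(D(t))_{jk} = L_{j−k}(t)` for
`j > k` and `0` otherwise. -/
noncomputable def Dmat (β τ : ℝ) (N : ℕ) (t : ℝ) : Matrix (Fin N) (Fin N) ℝ :=
  fun j k => if (k : ℕ) < (j : ℕ) then Li β τ ((j : ℕ) - (k : ℕ)) t else 0

/-- The induced `ℓ1` matrix norm `‖M‖₁ = max_{1≤j≤N} ∑_{i=1}^N |M_{ij}|`. -/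
noncomputable def matNorm1 {N : ℕ} (M : Matrix (Fin N) (Fin N) ℝ) : ℝ :=
  ⨆ j : Fin N, ∑ i : Fin N, |M i j|

/-- The successful transmission probability of a cached file stored with caching probability `t`:
`P_c(t) = (t/(t+L_0(t)))·‖(I − (1/(t+L_0(t)))·D(t))^{−1}‖₁`. -/
noncomputable def Pc (β τ : ℝ) (N : ℕ) (t : ℝ) : ℝ :=
  (t / (t + L0 β τ t)) *
    matNorm1 ((1 - (1 / (t + L0 β τ t)) • Dmat β τ N t)⁻¹)

/-!
With `aᵢ = Lᵢ(t) / (t + L₀(t))`, the matrix `I − D(t) / (t + L₀(t))` is lower-triangular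
Toeplitz, so its inverse is the lower-triangular Toeplitz matrix of the coefficients `bₙ` of
`1 / (1 − ∑ aᵢ Xⁱ)`, which are nonnegative. Its ℓ1 norm is therefore the first column sum
`P_N = b₀ + ⋯ + b_{N−1}`, and `Pₙ = 1 + ∑_{i<n} aᵢ P_{n−i}`. As `P` is increasing this gives
`P_N ≤ 1 + s₁ P_N`; an induction on `n`, using that `∑ (n − i) aᵢ` grows by at most `k` when `n`
grows by `k`, gives `n ≤ (n − ∑ (n − i) aᵢ) Pₙ`, which is the lower bound. Finally `s₁ < 1`
because the integrands of `L₁, L₂, …` are the terms of a geometric series whose sum is at most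
the integrand of `L₀`.
-/

section Resolvent

/-- The coefficients of `1 / (1 - ∑_{i ≥ 1} aᵢ Xⁱ)`; the value `a 0` plays no role. -/
noncomputable def resolventCoeff (a : ℕ → ℝ) : ℕ → ℝ
  | 0 => 1
  | d + 1 => ∑ m ∈ range (d + 1), a (m + 1) * resolventCoeff a (d - m)
decreasing_by omega

noncomputable def resolventSum (a : ℕ → ℝ) (n : ℕ) : ℝ :=
  ∑ d ∈ range n, resolventCoeff a d

noncomputable def weightedSum (a : ℕ → ℝ) (n : ℕ) : ℝ :=
  ∑ i ∈ Icc 1 (n - 1), ((n - i : ℕ) : ℝ) * a i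

variable {a : ℕ → ℝ}

lemma sum_Icc_one_eq_sum_range {M : Type*} [AddCommMonoid M] (g : ℕ → M) (n : ℕ) :
    ∑ i ∈ Icc 1 n, g i = ∑ m ∈ range n, g (m + 1) := by
  rw [← Ico_add_one_right_eq_Icc, sum_Ico_eq_sum_range, add_tsub_cancel_right]
  simp only [add_comm]

@[simp] lemma resolventCoeff_zero : resolventCoeff a 0 = 1 := by
  rw [resolventCoeff]

lemma resolventCoeff_succ (d : ℕ) :
    resolventCoeff a (d + 1) = ∑ i ∈ Icc 1 (d + 1), a i * resolventCoeff a (d + 1 - i) := by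
  rw [resolventCoeff, sum_Icc_one_eq_sum_range]
  simp only [Nat.add_sub_add_right]

lemma resolventCoeff_nonneg (ha : ∀ i, 0 ≤ a i) (d : ℕ) : 0 ≤ resolventCoeff a d := by
  induction d using Nat.strong_induction_on with
  | _ d ih =>
    cases d with
    | zero => simp
    | succ d =>
      rw [resolventCoeff]
      exact sum_nonneg fun m _ => mul_nonneg (ha _) (ih _ (by omega))

lemma resolventCoeff_sub {i j : ℕ} (hji : j < i) :
    resolventCoeff a (i - j) = ∑ l ∈ Ico j i, a (i - l) * resolventCoeff a (l - j) := by
  obtain ⟨d, hd⟩ : ∃ d, i - j = d + 1 := ⟨i - j - 1, by omega⟩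
  rw [hd, resolventCoeff_succ]
  refine sum_nbij' (fun k => i - k) (fun l => i - l) ?_ ?_ ?_ ?_ ?_ <;>
    intro k hk <;> simp only [mem_Icc, mem_Ico] at hk ⊢
  · omega
  · omega
  · omega
  · omega
  · rw [show i - (i - k) = k by omega, show i - k - j = d + 1 - k by omega]

lemma resolventSum_succ (n : ℕ) :
    resolventSum a (n + 1) = resolventSum a n + resolventCoeff a n :=
  sum_range_succ _ _

lemma resolventSum_nonneg (ha : ∀ i, 0 ≤ a i) (n : ℕ) : 0 ≤ resolventSum a n :=
  sum_nonneg fun d _ => resolventCoeff_nonneg ha d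

lemma resolventSum_mono (ha : ∀ i, 0 ≤ a i) : Monotone (resolventSum a) :=
  monotone_nat_of_le_succ fun n => by
    simpa [resolventSum_succ] using resolventCoeff_nonneg ha n

lemma resolventSum_eq {n : ℕ} (hn : 0 < n) :
    resolventSum a n = 1 + ∑ i ∈ Icc 1 (n - 1), a i * resolventSum a (n - i) := by
  obtain ⟨n, rfl⟩ : ∃ m, n = m + 1 := ⟨n - 1, by omega⟩
  rw [add_tsub_cancel_right]
  induction n with
  | zero => simp [resolventSum]
  | succ n ih =>
    have hstep : ∀ i ∈ Icc 1 (n + 1), a i * resolventSum a (n + 1 + 1 - i) =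
        a i * resolventSum a (n + 1 - i) + a i * resolventCoeff a (n + 1 - i) := by
      intro i hi
      rw [show n + 1 + 1 - i = n + 1 - i + 1 by grind, resolventSum_succ, mul_add]
    rw [resolventSum_succ, ih (by omega), resolventCoeff_succ, sum_congr rfl hstep,
      sum_add_distrib, sum_Icc_succ_top (by omega) fun i => a i * resolventSum a (n + 1 - i)]
    simp only [resolventSum, tsub_self, range_zero, sum_empty, mul_zero, add_zero]
    ring

lemma resolventSum_le (ha : ∀ i, 0 ≤ a i) {n : ℕ} (hS : ∑ i ∈ Icc 1 (n - 1), a i < 1) :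
    resolventSum a n ≤ 1 / (1 - ∑ i ∈ Icc 1 (n - 1), a i) := by
  rw [le_div_iff₀ (by linarith)]
  rcases Nat.eq_zero_or_pos n with rfl | hn
  · simp [resolventSum]
  have hrec : ∑ i ∈ Icc 1 (n - 1), a i * resolventSum a (n - i) ≤
      (∑ i ∈ Icc 1 (n - 1), a i) * resolventSum a n := by
    rw [sum_mul]
    exact sum_le_sum fun i _ =>
      mul_le_mul_of_nonneg_left (resolventSum_mono ha (Nat.sub_le n i)) (ha i)
  linarith [resolventSum_eq (a := a) hn]

lemma weightedSum_nonneg (ha : ∀ i, 0 ≤ a i) (n : ℕ) : 0 ≤ weightedSum a n :=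
  sum_nonneg fun i _ => mul_nonneg (Nat.cast_nonneg _) (ha i)

lemma weightedSum_div_le (ha : ∀ i, 0 ≤ a i) (n : ℕ) :
    weightedSum a n / n ≤ ∑ i ∈ Icc 1 (n - 1), a i := by
  rcases Nat.eq_zero_or_pos n with rfl | hn
  · simp [weightedSum]
  rw [div_le_iff₀ (by exact_mod_cast hn), sum_mul]
  refine sum_le_sum fun i _ => ?_
  rw [mul_comm]
  exact mul_le_mul_of_nonneg_left (by exact_mod_cast Nat.sub_le n i) (ha i)

lemma weightedSum_sub_le (ha : ∀ i, 0 ≤ a i) {k n : ℕ} (hkn : k ≤ n) :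
    weightedSum a n - weightedSum a k ≤ ((n - k : ℕ) : ℝ) * ∑ i ∈ Icc 1 (n - 1), a i := by
  have hk : weightedSum a k = ∑ i ∈ Icc 1 (n - 1), ((k - i : ℕ) : ℝ) * a i := by
    refine sum_subset (Icc_subset_Icc_right (by omega)) fun i hi hik => ?_
    simp only [mem_Icc] at hi hik
    simp [show k - i = 0 by omega]
  rw [weightedSum, hk, mul_sum, ← sum_sub_distrib]
  refine sum_le_sum fun i _ => ?_
  have : ((n - i : ℕ) : ℝ) ≤ (k - i : ℕ) + (n - k : ℕ) := by
    exact_mod_cast (by omega : n - i ≤ k - i + (n - k))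
  rw [← sub_mul]
  exact mul_le_mul_of_nonneg_right (by linarith) (ha i)

lemma le_sub_weightedSum_mul_resolventSum (ha : ∀ i, 0 ≤ a i) (n : ℕ)
    (hS : ∑ i ∈ Icc 1 (n - 1), a i ≤ 1) :
    (n : ℝ) ≤ (n - weightedSum a n) * resolventSum a n := by
  induction n using Nat.strong_induction_on with
  | _ n ih =>
  rcases Nat.eq_zero_or_pos n with rfl | hn
  · simp [resolventSum]
  have hterm : ∀ i ∈ Icc 1 (n - 1), ((n - i : ℕ) : ℝ) * a i ≤
      (n - weightedSum a n) * (a i * resolventSum a (n - i)) := by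
    intro i hi
    rw [mem_Icc] at hi
    have hIH := ih (n - i) (by omega) <| le_trans (sum_le_sum_of_subset_of_nonneg
      (Icc_subset_Icc_right (by omega)) fun j _ _ => ha j) hS
    have hW := weightedSum_sub_le ha (Nat.sub_le n i)
    rw [Nat.sub_sub_self (by omega)] at hW
    have hi_cast : ((n - i : ℕ) : ℝ) = n - i := Nat.cast_sub (by omega)
    have hiS : (i : ℝ) * ∑ j ∈ Icc 1 (n - 1), a j ≤ i := mul_le_of_le_one_right i.cast_nonneg hS
    have hdrop : ((n - i : ℕ) : ℝ) - weightedSum a (n - i) ≤ n - weightedSum a n := by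
      linarith
    calc ((n - i : ℕ) : ℝ) * a i
        ≤ ((n - i : ℕ) - weightedSum a (n - i)) * resolventSum a (n - i) * a i :=
          mul_le_mul_of_nonneg_right hIH (ha i)
      _ ≤ (n - weightedSum a n) * resolventSum a (n - i) * a i := by
          gcongr
          · exact ha i
          · exact resolventSum_nonneg ha _
      _ = (n - weightedSum a n) * (a i * resolventSum a (n - i)) := by ring
  have hsum : weightedSum a n ≤ (n - weightedSum a n) *
      ∑ i ∈ Icc 1 (n - 1), a i * resolventSum a (n - i) := by
    rw [mul_sum]
    exact sum_le_sum hterm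
  rw [resolventSum_eq hn, mul_one_add]
  linarith

lemma inv_one_sub_le_resolventSum (ha : ∀ i, 0 ≤ a i) {n : ℕ} (hn : 1 ≤ n)
    (hS : ∑ i ∈ Icc 1 (n - 1), a i < 1) :
    1 / (1 - weightedSum a n / n) ≤ resolventSum a n := by
  have hn' : (0 : ℝ) < n := by exact_mod_cast hn
  have hpos : 0 < 1 - weightedSum a n / n := by linarith [weightedSum_div_le ha n]
  rw [div_le_iff₀ hpos, one_sub_div hn'.ne', mul_div_assoc', le_div_iff₀ hn', one_mul, mul_comm]
  exact le_sub_weightedSum_mul_resolventSum ha n hS.le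

end Resolvent

section Toeplitz

variable {N : ℕ}

noncomputable def lowerToeplitz (N : ℕ) (f : ℕ → ℝ) : Matrix (Fin N) (Fin N) ℝ :=
  Matrix.of fun i j => if (j : ℕ) ≤ i then f (i - j) else 0

noncomputable def strictLowerToeplitz (N : ℕ) (f : ℕ → ℝ) : Matrix (Fin N) (Fin N) ℝ :=
  Matrix.of fun i j => if (j : ℕ) < i then f (i - j) else 0

lemma smul_strictLowerToeplitz (c : ℝ) (f : ℕ → ℝ) :
    c • strictLowerToeplitz N f = strictLowerToeplitz N fun i => c * f i := by
  ext i j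
  simp [strictLowerToeplitz, mul_ite]

lemma strictLowerToeplitz_mul_lowerToeplitz_resolventCoeff (a : ℕ → ℝ) :
    strictLowerToeplitz N a * lowerToeplitz N (resolventCoeff a) =
      lowerToeplitz N (resolventCoeff a) - 1 := by
  ext i j
  have hentry : ∀ l : Fin N, strictLowerToeplitz N a i l * lowerToeplitz N (resolventCoeff a) l j =
      if (j : ℕ) ≤ l ∧ (l : ℕ) < i then a (i - l) * resolventCoeff a (l - j) else 0 := fun l => by
    simp only [strictLowerToeplitz, lowerToeplitz, Matrix.of_apply]
    split_ifs <;> simp_all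
  have hsum : (strictLowerToeplitz N a * lowerToeplitz N (resolventCoeff a)) i j =
      ∑ l ∈ Ico (j : ℕ) i, a (i - l) * resolventCoeff a (l - j) := by
    rw [Matrix.mul_apply, sum_congr rfl fun l _ => hentry l, Fin.sum_univ_eq_sum_range (fun l =>
      if (j : ℕ) ≤ l ∧ l < (i : ℕ) then a (i - l) * resolventCoeff a (l - j) else 0), ← sum_filter]
    congr 1
    ext l
    simp only [mem_filter, mem_range, mem_Ico]
    omega
  rw [hsum, Matrix.sub_apply, Matrix.one_apply]
  simp only [lowerToeplitz, Matrix.of_apply]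
  rcases lt_trichotomy (j : ℕ) i with h | h | h
  · rw [if_pos h.le, if_neg (Fin.ne_of_gt h), resolventCoeff_sub h, sub_zero]
  · simp [Fin.ext h]
  · rw [Ico_eq_empty_of_le h.le, if_neg h.not_ge, if_neg (Fin.ne_of_lt h), sum_empty, sub_zero]

lemma inv_one_sub_strictLowerToeplitz (a : ℕ → ℝ) :
    (1 - strictLowerToeplitz N a)⁻¹ = lowerToeplitz N (resolventCoeff a) := by
  refine Matrix.inv_eq_right_inv ?_
  rw [sub_mul, one_mul, strictLowerToeplitz_mul_lowerToeplitz_resolventCoeff, sub_sub_cancel]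

lemma sum_lowerToeplitz_apply (f : ℕ → ℝ) (j : Fin N) :
    ∑ i, lowerToeplitz N f i j = ∑ d ∈ range (N - j), f d := by
  simp only [lowerToeplitz, Matrix.of_apply]
  rw [Fin.sum_univ_eq_sum_range (fun i => if (j : ℕ) ≤ i then f (i - j) else 0), ← sum_filter]
  have : (range N).filter (fun i => (j : ℕ) ≤ i) = Ico (j : ℕ) N := by
    ext l
    simp only [mem_filter, mem_range, mem_Ico]
    omega
  rw [this, sum_Ico_eq_sum_range]
  simp

lemma matNorm1_lowerToeplitz {f : ℕ → ℝ} (hf : ∀ d, 0 ≤ f d) :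
    matNorm1 (lowerToeplitz N f) = ∑ d ∈ range N, f d := by
  have hentry : ∀ i j, 0 ≤ lowerToeplitz N f i j := fun i j => by
    simp only [lowerToeplitz, Matrix.of_apply]
    split_ifs <;> simp [hf]
  simp only [matNorm1, abs_of_nonneg (hentry _ _), sum_lowerToeplitz_apply]
  rcases N with _ | N
  · simp
  refine le_antisymm (ciSup_le fun j => ?_) ?_
  · exact sum_le_sum_of_subset_of_nonneg (range_mono (Nat.sub_le _ _)) fun d _ _ => hf d
  · exact le_ciSup_of_le (Set.finite_range _).bddAbove 0 (by simp)

end Toeplitz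

section Integrals

noncomputable def mixedIntegral (t : ℝ) (f : ℝ → ℝ) : ℝ :=
  2 * t * (∫ u in Set.Ioi (1 : ℝ), f u) + 2 * (1 - t) * (∫ u in Set.Ioi (0 : ℝ), f u)

variable {t : ℝ}

lemma mixedIntegral_nonneg (ht : t ∈ Set.Icc (0 : ℝ) 1) {f : ℝ → ℝ} (hf : ∀ u, 0 < u → 0 ≤ f u) :
    0 ≤ mixedIntegral t f := by
  have h₁ : 0 ≤ ∫ u in Set.Ioi (1 : ℝ), f u :=
    setIntegral_nonneg measurableSet_Ioi fun u hu => hf u (one_pos.trans hu)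
  have h₀ : 0 ≤ ∫ u in Set.Ioi (0 : ℝ), f u := setIntegral_nonneg measurableSet_Ioi hf
  have ht₀ := ht.1
  have ht₁ : 0 ≤ 1 - t := sub_nonneg.2 ht.2
  unfold mixedIntegral
  positivity

lemma mixedIntegral_mono (ht : t ∈ Set.Icc (0 : ℝ) 1) {f g : ℝ → ℝ}
    (hf : IntegrableOn f (Set.Ioi 0)) (hg : IntegrableOn g (Set.Ioi 0))
    (hfg : ∀ u, 0 < u → f u ≤ g u) : mixedIntegral t f ≤ mixedIntegral t g := by
  have hsub : Set.Ioi (1 : ℝ) ⊆ Set.Ioi 0 := Set.Ioi_subset_Ioi zero_le_one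
  have h₁ : ∫ u in Set.Ioi (1 : ℝ), f u ≤ ∫ u in Set.Ioi (1 : ℝ), g u :=
    setIntegral_mono_on (hf.mono_set hsub) (hg.mono_set hsub) measurableSet_Ioi
      fun u hu => hfg u (one_pos.trans hu)
  have h₀ : ∫ u in Set.Ioi (0 : ℝ), f u ≤ ∫ u in Set.Ioi (0 : ℝ), g u :=
    setIntegral_mono_on hf hg measurableSet_Ioi hfg
  unfold mixedIntegral
  gcongr
  · linarith [ht.1]
  · linarith [ht.2]

lemma sum_mixedIntegral {ι : Type*} (s : Finset ι) {f : ι → ℝ → ℝ}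
    (hf : ∀ i ∈ s, IntegrableOn (f i) (Set.Ioi 0)) :
    ∑ i ∈ s, mixedIntegral t (f i) = mixedIntegral t fun u => ∑ i ∈ s, f i u := by
  have hsub : Set.Ioi (1 : ℝ) ⊆ Set.Ioi 0 := Set.Ioi_subset_Ioi zero_le_one
  simp only [mixedIntegral, sum_add_distrib, ← mul_sum]
  rw [integral_finsetSum s fun i hi => (hf i hi).mono_set hsub, integral_finsetSum s hf]

variable {β τ : ℝ}

lemma L0_eq_mixedIntegral : L0 β τ t = mixedIntegral t fun u => τ * u / (u ^ β + τ) := rfl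

lemma Li_eq_mixedIntegral (i : ℕ) :
    Li β τ i t = mixedIntegral t fun u => τ ^ i * u ^ (β + 1) / (u ^ β + τ) ^ (i + 1) := rfl

lemma sum_Icc_Li_integrand {u : ℝ} (hτ : 0 < τ) (hu : 0 < u) (K : ℕ) :
    ∑ i ∈ Icc 1 K, τ ^ i * u ^ (β + 1) / (u ^ β + τ) ^ (i + 1) =
      τ * u / (u ^ β + τ) * (1 - (τ / (u ^ β + τ)) ^ K) := by
  have hx := Real.rpow_pos_of_pos hu β
  induction K with
  | zero => simp
  | succ K ih =>
    rw [sum_Icc_succ_top (by omega), ih, Real.rpow_add hu, Real.rpow_one]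
    simp only [div_pow]
    field_simp
    ring

lemma sum_Icc_Li_integrand_le {u : ℝ} (hτ : 0 < τ) (hu : 0 < u) (K : ℕ) :
    ∑ i ∈ Icc 1 K, τ ^ i * u ^ (β + 1) / (u ^ β + τ) ^ (i + 1) ≤ τ * u / (u ^ β + τ) := by
  have hx := Real.rpow_pos_of_pos hu β
  have hq : 0 ≤ (τ / (u ^ β + τ)) ^ K := by positivity
  rw [sum_Icc_Li_integrand hτ hu]
  exact mul_le_of_le_one_right (by positivity) (by linarith)

lemma integrableOn_L0_integrand (hβ : 2 < β) (hτ : 0 < τ) :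
    IntegrableOn (fun u => τ * u / (u ^ β + τ)) (Set.Ioi 0) := by
  rw [← Set.Ioc_union_Ioi_eq_Ioi zero_le_one]
  refine IntegrableOn.union ?_ ?_
  · refine (ContinuousOn.integrableOn_Icc ?_).mono_set Set.Ioc_subset_Icc_self
    refine ContinuousOn.div (by fun_prop)
      ((Real.continuous_rpow_const (by linarith)).add continuous_const).continuousOn fun u hu => ?_
    have := Real.rpow_nonneg hu.1 β
    positivity
  · refine ((integrableOn_Ioi_rpow_of_lt (by linarith : 1 - β < -1) one_pos).const_mul τ).mono'
      (by fun_prop : Measurable fun u : ℝ => τ * u / (u ^ β + τ)).aestronglyMeasurable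
      (ae_restrict_of_forall_mem measurableSet_Ioi fun u (hu : 1 < u) => ?_)
    have hu0 : 0 < u := one_pos.trans hu
    have hx := Real.rpow_pos_of_pos hu0 β
    rw [Real.norm_of_nonneg (by positivity), Real.rpow_sub hu0, Real.rpow_one, ← mul_div_assoc]
    exact div_le_div_of_nonneg_left (by positivity) hx (by linarith)

lemma integrableOn_Li_integrand (hβ : 2 < β) (hτ : 0 < τ) {i : ℕ} (hi : 1 ≤ i) :
    IntegrableOn (fun u => τ ^ i * u ^ (β + 1) / (u ^ β + τ) ^ (i + 1)) (Set.Ioi 0) := by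
  refine (integrableOn_L0_integrand hβ hτ).mono' (by fun_prop : Measurable fun u : ℝ =>
      τ ^ i * u ^ (β + 1) / (u ^ β + τ) ^ (i + 1)).aestronglyMeasurable
    (ae_restrict_of_forall_mem measurableSet_Ioi fun u (hu : 0 < u) => ?_)
  have hx := Real.rpow_pos_of_pos hu β
  rw [Real.norm_of_nonneg (by positivity)]
  refine le_trans ?_ (sum_Icc_Li_integrand_le hτ hu i)
  exact single_le_sum (f := fun i => τ ^ i * u ^ (β + 1) / (u ^ β + τ) ^ (i + 1))
    (fun j _ => by positivity) (mem_Icc.2 ⟨hi, le_rfl⟩)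

lemma L0_nonneg (hτ : 0 < τ) (ht : t ∈ Set.Icc (0 : ℝ) 1) : 0 ≤ L0 β τ t :=
  mixedIntegral_nonneg ht fun u hu => by
    have := Real.rpow_pos_of_pos hu β
    positivity

lemma Li_nonneg (hτ : 0 < τ) (ht : t ∈ Set.Icc (0 : ℝ) 1) (i : ℕ) : 0 ≤ Li β τ i t :=
  mixedIntegral_nonneg ht fun u hu => by
    have := Real.rpow_pos_of_pos hu β
    positivity

lemma sum_Li_le_L0 (hβ : 2 < β) (hτ : 0 < τ) (ht : t ∈ Set.Icc (0 : ℝ) 1) (K : ℕ) :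
    ∑ i ∈ Icc 1 K, Li β τ i t ≤ L0 β τ t := by
  simp only [Li_eq_mixedIntegral, L0_eq_mixedIntegral]
  have hint : ∀ i ∈ Icc 1 K, IntegrableOn
      (fun u => τ ^ i * u ^ (β + 1) / (u ^ β + τ) ^ (i + 1)) (Set.Ioi 0) :=
    fun i hi => integrableOn_Li_integrand hβ hτ (mem_Icc.1 hi).1
  rw [sum_mixedIntegral _ hint]
  exact mixedIntegral_mono ht (integrable_finsetSum _ hint) (integrableOn_L0_integrand hβ hτ)
    fun u hu => sum_Icc_Li_integrand_le hτ hu K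

end Integrals

lemma Pc_eq_mul_resolventSum {β τ t : ℝ} (N : ℕ) (hτ : 0 < τ) (ht : t ∈ Set.Icc (0 : ℝ) 1) :
    Pc β τ N t = t / (t + L0 β τ t) *
      resolventSum (fun i => 1 / (t + L0 β τ t) * Li β τ i t) N := by
  have hden : 0 ≤ 1 / (t + L0 β τ t) := by
    have := L0_nonneg (β := β) hτ ht
    have := ht.1
    positivity
  rw [Pc, show Dmat β τ N t = strictLowerToeplitz N fun i => Li β τ i t from rfl,
    smul_strictLowerToeplitz, inv_one_sub_strictLowerToeplitz,
    matNorm1_lowerToeplitz (resolventCoeff_nonneg fun i => mul_nonneg hden (Li_nonneg hτ ht i))]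
  rfl

/-- **Property 1 of the paper's Lemma 3**: for `t ∈ (0,1]`, setting
`s₁ = (1/(t+L_0(t)))·∑_{i=1}^{N−1} L_i(t)` and
`s₂ = (1/(t+L_0(t)))·∑_{i=1}^{N−1} ((N−i)/N)·L_i(t)`, one has `0 ≤ s₂ ≤ s₁ < 1` and
`(t/(t+L_0(t)))·(1/(1−s₂)) ≤ P_c(t) ≤ (t/(t+L_0(t)))·(1/(1−s₁))`. -/
theorem Pc_two_sided_fractional_bounds (β τ : ℝ) (hβ : 2 < β) (hτ : 0 < τ)
    (N : ℕ) (hN : 1 ≤ N) (t : ℝ) (ht : t ∈ Set.Ioc (0 : ℝ) 1) :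
    0 ≤ (1 / (t + L0 β τ t)) * ∑ i ∈ Finset.Icc 1 (N - 1), (((N - i : ℕ) : ℝ) / (N : ℝ)) * Li β τ i t ∧
    (1 / (t + L0 β τ t)) * ∑ i ∈ Finset.Icc 1 (N - 1), (((N - i : ℕ) : ℝ) / (N : ℝ)) * Li β τ i t ≤
      (1 / (t + L0 β τ t)) * ∑ i ∈ Finset.Icc 1 (N - 1), Li β τ i t ∧
    (1 / (t + L0 β τ t)) * ∑ i ∈ Finset.Icc 1 (N - 1), Li β τ i t < 1 ∧
    (t / (t + L0 β τ t)) *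
        (1 / (1 - (1 / (t + L0 β τ t)) *
          ∑ i ∈ Finset.Icc 1 (N - 1), (((N - i : ℕ) : ℝ) / (N : ℝ)) * Li β τ i t)) ≤
      Pc β τ N t ∧
    Pc β τ N t ≤
      (t / (t + L0 β τ t)) *
        (1 / (1 - (1 / (t + L0 β τ t)) * ∑ i ∈ Finset.Icc 1 (N - 1), Li β τ i t)) := by
  have ht' : t ∈ Set.Icc (0 : ℝ) 1 := Set.Ioc_subset_Icc_self ht
  have hden : 0 < t + L0 β τ t := add_pos_of_pos_of_nonneg ht.1 (L0_nonneg hτ ht')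
  set a : ℕ → ℝ := fun i => 1 / (t + L0 β τ t) * Li β τ i t
  have ha : ∀ i, 0 ≤ a i := fun i => mul_nonneg (by positivity) (Li_nonneg hτ ht' i)
  have hs₁ : 1 / (t + L0 β τ t) * ∑ i ∈ Icc 1 (N - 1), Li β τ i t = ∑ i ∈ Icc 1 (N - 1), a i :=
    mul_sum _ _ _
  have hs₂ : 1 / (t + L0 β τ t) * ∑ i ∈ Icc 1 (N - 1), ((N - i : ℕ) : ℝ) / N * Li β τ i t =
      weightedSum a N / N := by
    rw [weightedSum, mul_sum, sum_div]
    exact sum_congr rfl fun i _ => by ring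
  have hs₁_lt : ∑ i ∈ Icc 1 (N - 1), a i < 1 := by
    rw [← hs₁, one_div_mul_eq_div, div_lt_one hden]
    linarith [sum_Li_le_L0 hβ hτ ht' (N - 1), ht.1]
  have hfactor : 0 ≤ t / (t + L0 β τ t) := div_nonneg ht.1.le hden.le
  rw [hs₁, hs₂, Pc_eq_mul_resolventSum N hτ ht']
  exact ⟨div_nonneg (weightedSum_nonneg ha N) N.cast_nonneg, weightedSum_div_le ha N, hs₁_lt,
    mul_le_mul_of_nonneg_left (inv_one_sub_le_resolventSum ha hN hs₁_lt) hfactor,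
    mul_le_mul_of_nonneg_left (resolventSum_le ha hs₁_lt) hfactor⟩
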